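/- Let m ≥ 3, let H be either all of Equiv.Perm (Fin m) or the subgroup alternatingGroup (Fin m), and let W be the subgroup of Equiv.Perm (Fin m × Fin 2) consisting of all block-preserving permutations σ with f σ ∈ H (so W is isomorphic to the wreath product C₂ ≀ H). Let G ≤ W be a subgroup acting transitively on Fin m × Fin 2 whose image {f g : g ∈ G} equals H. Then: (a) the index of G in W belongs to {1, 2, 2^(m−1), 2^m}; (b) if the index of G in W equals 2^(m−1), then the permutation ε (which swaps the two points of every block) belongs to G; (c) if the index of G in W equals 2, then every block-fixing permutation σ with Equiv.Perm.sign σ = 1 belongs to G. -/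

import Mathlib

/-!
Flipping the blocks in which `v : Fin m → Fin 2` is `1` identifies `(ZMod 2)^m` with the
block-fixing subgroup `K`, the kernel of `f`. As `f` maps both `G` and `W` onto `H`,
`[W : G] = [K : G ∩ K] = [(ZMod 2)^m : A]`, where `A` is the set of flips lying in `G`.
Conjugating by `G` permutes coordinates by `H ⊇ Aₘ`, so `A` is an `Aₘ`-invariant subgroup.
Such a subgroup is `0`, `{0, 1}`, or contains the even-weight vectors `E` (which have
index 2): a non-constant `v ∈ A` plus its image under a suitable 3-cycle is a weight-two
vector, `Aₘ` carries it to every weight-two vector, and these span `E`. This gives the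
indices `2^m`, `2^(m-1)`, `1` or `2`. Finally, a flip has sign `(-1)^weight`, so the
block-fixing permutations of sign 1 are exactly the flips by vectors in `E`.
-/

/-- A permutation of `Fin m × Fin 2` is block-preserving if it permutes the
blocks `{a} × Fin 2`. -/
def IsBlockPreserving {m : ℕ} (σ : Equiv.Perm (Fin m × Fin 2)) : Prop :=
  ∀ a : Fin m, (σ (a, 0)).1 = (σ (a, 1)).1

/-- A permutation of `Fin m × Fin 2` is block-fixing if it fixes every
block `{a} × Fin 2` setwise. -/
def IsBlockFixing {m : ℕ} (σ : Equiv.Perm (Fin m × Fin 2)) : Prop :=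
  ∀ (a : Fin m) (i : Fin 2), (σ (a, i)).1 = a

lemma IsBlockPreserving.fst_apply {m : ℕ} {σ : Equiv.Perm (Fin m × Fin 2)}
    (hσ : IsBlockPreserving σ) (x : Fin m × Fin 2) : (σ x).1 = (σ (x.1, 0)).1 := by
  obtain ⟨a, i⟩ := x
  fin_cases i
  · rfl
  · exact (hσ a).symm

/-- The subgroup of `Equiv.Perm (Fin m × Fin 2)` of all block-preserving permutations
whose induced permutation of the blocks lies in `H`; this is the wreath product
`C₂ ≀ H`. -/
def blockW {m : ℕ} (H : Subgroup (Equiv.Perm (Fin m))) :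
    Subgroup (Equiv.Perm (Fin m × Fin 2)) where
  carrier := {σ | IsBlockPreserving σ ∧ ∃ π ∈ H, ∀ a, (σ (a, 0)).1 = π a}
  one_mem' := ⟨fun _ => rfl, 1, H.one_mem, fun _ => rfl⟩
  mul_mem' := by
    rintro σ τ ⟨hσ, πσ, hπσH, hπσ⟩ ⟨hτ, πτ, hπτH, hπτ⟩
    constructor
    · intro a
      have h1 : ((σ * τ) (a, 0)).1 = (σ ((τ (a, 0)).1, 0)).1 := hσ.fst_apply (τ (a, 0))
      have h2 : ((σ * τ) (a, 1)).1 = (σ ((τ (a, 1)).1, 0)).1 := hσ.fst_apply (τ (a, 1))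
      rw [h1, h2, hτ a]
    · refine ⟨πσ * πτ, H.mul_mem hπσH hπτH, fun a => ?_⟩
      have h1 : ((σ * τ) (a, 0)).1 = (σ ((τ (a, 0)).1, 0)).1 := hσ.fst_apply (τ (a, 0))
      rw [h1, hπσ, hπτ a]
      rfl
  inv_mem' := by
    rintro σ ⟨hσ, π, hπH, hπ⟩
    have key : ∀ (a : Fin m) (i : Fin 2), σ⁻¹ (a, i) = (π⁻¹ a, 0) ∨
        σ⁻¹ (a, i) = (π⁻¹ a, 1) := by
      intro a i
      have h0 : (σ (π⁻¹ a, 0)).1 = a := by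
        rw [hπ]; exact π.apply_symm_apply a
      have h1 : (σ (π⁻¹ a, 1)).1 = a := by rw [← hσ (π⁻¹ a)]; exact h0
      have hne : σ (π⁻¹ a, 0) ≠ σ (π⁻¹ a, 1) := by
        intro h
        have := σ.injective h
        simp at this
      have hsnd : (σ (π⁻¹ a, 0)).2 ≠ (σ (π⁻¹ a, 1)).2 := by
        intro h
        exact hne (Prod.ext (h0.trans h1.symm) h)
      have hi : i = (σ (π⁻¹ a, 0)).2 ∨ i = (σ (π⁻¹ a, 1)).2 := by
        have hi2 := i.isLt
        have ha2 := (σ (π⁻¹ a, 0)).2.isLt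
        have hb2 := (σ (π⁻¹ a, 1)).2.isLt
        have : (i : ℕ) = ((σ (π⁻¹ a, 0)).2 : ℕ) ∨ (i : ℕ) = ((σ (π⁻¹ a, 1)).2 : ℕ) := by
          have hne' : ((σ (π⁻¹ a, 0)).2 : ℕ) ≠ ((σ (π⁻¹ a, 1)).2 : ℕ) :=
            fun h => hsnd (Fin.ext h)
          omega
        exact this.imp (fun h => Fin.ext h) (fun h => Fin.ext h)
      rcases hi with hi | hi
      · left
        have : (a, i) = σ (π⁻¹ a, 0) := Prod.ext h0.symm hi
        rw [this, ← Equiv.Perm.mul_apply, inv_mul_cancel, Equiv.Perm.one_apply]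
      · right
        have : (a, i) = σ (π⁻¹ a, 1) := Prod.ext h1.symm hi
        rw [this, ← Equiv.Perm.mul_apply, inv_mul_cancel, Equiv.Perm.one_apply]
    have keyfst : ∀ (a : Fin m) (i : Fin 2), (σ⁻¹ (a, i)).1 = π⁻¹ a := by
      intro a i
      rcases key a i with h | h <;> rw [h]
    exact ⟨fun a => (keyfst a 0).trans (keyfst a 1).symm,
      π⁻¹, H.inv_mem hπH, fun a => keyfst a 0⟩

lemma Fin.two_add_self (x : Fin 2) : x + x = 0 := by revert x; decide

lemma Fin.two_eq_zero_or_one (x : Fin 2) : x = 0 ∨ x = 1 := by revert x; decide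

lemma Fin.two_eq_add_one_of_ne {x y : Fin 2} (h : x ≠ y) : x = y + 1 := by revert x y; decide

lemma Fin.two_add_eq_one_of_ne {x y : Fin 2} (h : x ≠ y) : x + y = 1 := by revert x y; decide

lemma Fin.two_add_one_ne (x : Fin 2) : x + 1 ≠ x := by revert x; decide

section Vectors

variable {α : Type*}

lemma eq_zero_or_eq_one_of_forall_eq [Nonempty α] {v : α → Fin 2} (hv : ∀ a b, v a = v b) :
    v = 0 ∨ v = 1 := by
  obtain ⟨a₀⟩ := ‹Nonempty α›
  rcases Fin.two_eq_zero_or_one (v a₀) with h | h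
  · exact .inl (funext fun a => (hv a a₀).trans h)
  · exact .inr (funext fun a => (hv a a₀).trans h)

lemma index_eq_of_forall_eq_zero_or_eq_one [Fintype α] [Nonempty α] {A : AddSubgroup (α → Fin 2)}
    (hA : ∀ v ∈ A, v = 0 ∨ v = 1) :
    A.index = 2 ^ Fintype.card α ∨ (A.index = 2 ^ (Fintype.card α - 1) ∧ 1 ∈ A) := by
  by_cases h1 : (1 : α → Fin 2) ∈ A
  · refine .inr ⟨?_, h1⟩
    have hA1 : A = AddSubgroup.zmultiples 1 := le_antisymm
      (fun v hv => by
        rcases hA v hv with rfl | rfl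
        exacts [zero_mem _, AddSubgroup.mem_zmultiples _])
      (AddSubgroup.zmultiples_le_of_mem h1)
    have hcard : Nat.card A = 2 := by
      rw [hA1, Nat.card_zmultiples]
      refine addOrderOf_eq_prime (funext fun _ => by simp) ?_
      obtain ⟨a⟩ := ‹Nonempty α›
      exact fun h => absurd (congrFun h a) (by simp)
    have hpow : 2 ^ Fintype.card α = 2 * 2 ^ (Fintype.card α - 1) := by
      rw [← pow_succ', Nat.sub_add_cancel Fintype.card_pos]
    have := A.card_mul_index
    rw [hcard, Nat.card_fun, Nat.card_eq_fintype_card, Nat.card_eq_fintype_card, Fintype.card_fin,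
      hpow] at this
    omega
  · refine .inl ?_
    have hA0 : A = ⊥ := (AddSubgroup.eq_bot_iff_forall A).mpr fun v hv =>
      (hA v hv).resolve_right fun h => h1 (h ▸ hv)
    rw [hA0, AddSubgroup.index_bot, Nat.card_fun, Nat.card_eq_fintype_card,
      Nat.card_eq_fintype_card, Fintype.card_fin]

def parity [Fintype α] : (α → Fin 2) →+ Fin 2 where
  toFun v := ∑ a, v a
  map_zero' := by simp
  map_add' v w := by simp [Finset.sum_add_distrib]

lemma parity_apply [Fintype α] (v : α → Fin 2) : parity v = ∑ a, v a := rfl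

variable [DecidableEq α]

def pairVec (a b : α) : α → Fin 2 := Pi.single a 1 + Pi.single b 1

lemma pairVec_comm (a b : α) : pairVec a b = pairVec b a := add_comm _ _

lemma pairVec_comp {π : Equiv.Perm α} {a b p q : α} (hp : π p = a) (hq : π q = b) :
    pairVec a b ∘ π = pairVec p q := by
  rw [pairVec, Pi.add_comp, Pi.single_comp_equiv, Pi.single_comp_equiv, ← hp, ← hq,
    Equiv.symm_apply_apply, Equiv.symm_apply_apply, pairVec]

lemma add_comp_swap_mul_swap_eq_pairVec {v : α → Fin 2} {a b c : α} (hab : a ≠ b) (hac : a ≠ c)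
    (hbc : b ≠ c) (hvab : v a ≠ v b) (hvbc : v b = v c) :
    v + v ∘ (Equiv.swap a b * Equiv.swap a c) = pairVec a b := by
  funext x
  simp only [Pi.add_apply, Function.comp_apply, Equiv.Perm.mul_apply, pairVec, Pi.single_apply]
  by_cases hxa : x = a
  · subst hxa
    simp [Equiv.swap_apply_of_ne_of_ne hac.symm hbc.symm, hab, ← hvbc,
      Fin.two_add_eq_one_of_ne hvab]
  by_cases hxb : x = b
  · subst hxb
    simp [Equiv.swap_apply_of_ne_of_ne hab.symm hbc, hab.symm, add_comm (v x),
      Fin.two_add_eq_one_of_ne hvab]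
  by_cases hxc : x = c
  · subst hxc
    simp [hac.symm, hbc.symm, hvbc, Fin.two_add_self]
  · simp [Equiv.swap_apply_of_ne_of_ne hxa hxc, Equiv.swap_apply_of_ne_of_ne hxa hxb, hxa, hxb,
      Fin.two_add_self]

variable [Fintype α]

@[simp] lemma parity_single (a : α) (x : Fin 2) : parity (Pi.single a x) = x := by
  simp [parity_apply]

lemma index_ker_parity [Nonempty α] : (parity : (α → Fin 2) →+ Fin 2).ker.index = 2 := by
  have hsurj : Function.Surjective (parity : (α → Fin 2) →+ Fin 2) :=
    fun x => ⟨Pi.single (Classical.arbitrary α) x, parity_single _ x⟩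
  rw [AddSubgroup.index_ker, AddMonoidHom.range_eq_top_of_surjective _ hsurj,
    AddSubgroup.card_top, Nat.card_eq_fintype_card, Fintype.card_fin]

variable {A : AddSubgroup (α → Fin 2)}

lemma exists_pairVec_mem (hA : ∀ π ∈ alternatingGroup α, ∀ v ∈ A, v ∘ π ∈ A)
    {v : α → Fin 2} (hv : v ∈ A) {a b c : α} (hab : a ≠ b) (hac : a ≠ c) (hbc : b ≠ c)
    (hvab : v a ≠ v b) : ∃ p q, p ≠ q ∧ pairVec p q ∈ A := by
  have hmem {p q r : α} (hpq : p ≠ q) (hpr : p ≠ r) (hqr : q ≠ r) (hvpq : v p ≠ v q)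
      (hvqr : v q = v r) : pairVec p q ∈ A :=
    add_comp_swap_mul_swap_eq_pairVec hpq hpr hqr hvpq hvqr ▸ A.add_mem hv
      (hA _ (Equiv.Perm.isThreeCycle_swap_mul_swap_same hpq hpr hqr).mem_alternatingGroup v hv)
  by_cases hvbc : v b = v c
  · exact ⟨a, b, hab, hmem hab hac hbc hvab hvbc⟩
  · refine ⟨b, c, hbc, hmem hbc hab.symm hac.symm hvbc ?_⟩
    rw [Fin.two_eq_add_one_of_ne (Ne.symm hvbc), Fin.two_eq_add_one_of_ne hvab]

lemma pairVec_mem_of_pairVec_mem (hA : ∀ π ∈ alternatingGroup α, ∀ v ∈ A, v ∘ π ∈ A)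
    {a b : α} (hab : a ≠ b) (habA : pairVec a b ∈ A) {p q : α} (hpq : p ≠ q) :
    pairVec p q ∈ A := by
  set π : Equiv.Perm α := Equiv.swap (Equiv.swap p a q) b * Equiv.swap p a
  have hπp : π p = a := by
    have : Equiv.swap p a q ≠ a := by simpa using (Equiv.swap p a).injective.ne hpq.symm
    simp [π, Equiv.swap_apply_of_ne_of_ne this.symm hab]
  have hπq : π q = b := by simp [π]
  rcases Int.units_eq_one_or (Equiv.Perm.sign π) with hπ | hπ
  · exact pairVec_comp hπp hπq ▸ hA π hπ _ habA
  · -- an odd `π` is corrected by `swap p q`, which only exchanges the two ends of the pair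
    have hπ' : π * Equiv.swap p q ∈ alternatingGroup α := by
      rw [Equiv.Perm.mem_alternatingGroup, map_mul, hπ, Equiv.Perm.sign_swap hpq]; rfl
    have := hA _ hπ' _ habA
    rwa [pairVec_comp (p := q) (q := p) (by simp [hπp]) (by simp [hπq]), pairVec_comm] at this

lemma ker_parity_le_of_pairVec_mem [Nonempty α]
    (hpairs : ∀ p q : α, p ≠ q → pairVec p q ∈ A) : parity.ker ≤ A := by
  obtain ⟨a₀⟩ := ‹Nonempty α›
  -- `w ↦ w + single a₀ (parity w)` is additive and sends each `single i 1` to a pair vector or 0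
  have key (w : α → Fin 2) : w + Pi.single a₀ (parity w) ∈ A := by
    induction w using Pi.single_induction with
    | zero => simp
    | add f g hf hg =>
      simpa only [map_add, Pi.single_add, add_add_add_comm] using A.add_mem hf hg
    | single i x =>
      rw [parity_single]
      rcases Fin.two_eq_zero_or_one x with rfl | rfl
      · simp
      by_cases hi : i = a₀
      · simp [hi, ← Pi.single_add, Fin.two_add_self]
      · exact hpairs i a₀ hi
  intro v hv
  simpa [AddMonoidHom.mem_ker.mp hv] using key v

lemma forall_eq_zero_or_eq_one_or_ker_parity_le
    (hA : ∀ π ∈ alternatingGroup α, ∀ v ∈ A, v ∘ π ∈ A) (hα : 3 ≤ Fintype.card α) :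
    (∀ v ∈ A, v = 0 ∨ v = 1) ∨ parity.ker ≤ A := by
  have : Nonempty α := Fintype.card_pos_iff.mp (by omega)
  refine or_iff_not_imp_left.mpr fun hconst => ?_
  push Not at hconst
  obtain ⟨v, hv, hv0, hv1⟩ := hconst
  obtain ⟨a, b, hvab⟩ : ∃ a b, v a ≠ v b := by
    by_contra! h
    exact hv0 ((eq_zero_or_eq_one_of_forall_eq h).resolve_right hv1)
  have hab : a ≠ b := fun h => hvab (h ▸ rfl)
  obtain ⟨c, -, hc⟩ := Finset.exists_mem_notMem_of_card_lt_card
    (s := {a, b}) (t := Finset.univ) (Finset.card_le_two.trans_lt (by simp; omega))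
  simp only [Finset.mem_insert, Finset.mem_singleton, not_or] at hc
  obtain ⟨p, q, hpq, hpqA⟩ := exists_pairVec_mem hA hv hab (Ne.symm hc.1) (Ne.symm hc.2) hvab
  exact ker_parity_le_of_pairVec_mem fun _ _ => pairVec_mem_of_pairVec_mem hA hpq hpqA

lemma index_dvd_two_of_ker_parity_le [Nonempty α] (h : parity.ker ≤ A) : A.index ∣ 2 := by
  simpa only [index_ker_parity] using AddSubgroup.index_dvd_of_le h

end Vectors

section Blocks

variable {m : ℕ}

lemma IsBlockPreserving.apply_add {σ : Equiv.Perm (Fin m × Fin 2)} (hσ : IsBlockPreserving σ)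
    (a : Fin m) (i j : Fin 2) : σ (a, i + j) = ((σ (a, i)).1, (σ (a, i)).2 + j) := by
  rcases Fin.two_eq_zero_or_one j with rfl | rfl
  · simp
  have hfst : (σ (a, i + 1)).1 = (σ (a, i)).1 :=
    (hσ.fst_apply _).trans (hσ.fst_apply (a, i)).symm
  refine Prod.ext hfst (Fin.two_eq_add_one_of_ne fun h => Fin.two_add_one_ne i ?_)
  simpa using σ.injective (Prod.ext hfst h)

def blockFlip (v : Fin m → Fin 2) : Equiv.Perm (Fin m × Fin 2) :=
  Equiv.prodCongrRight fun a => Equiv.addRight (v a)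

@[simp] lemma blockFlip_apply (v : Fin m → Fin 2) (a : Fin m) (i : Fin 2) :
    blockFlip v (a, i) = (a, i + v a) := rfl

@[simp] lemma blockFlip_zero : blockFlip (0 : Fin m → Fin 2) = 1 := by
  ext ⟨a, i⟩ <;> simp

lemma blockFlip_add (v w : Fin m → Fin 2) : blockFlip (v + w) = blockFlip v * blockFlip w := by
  ext ⟨a, i⟩ <;> simp [add_assoc, add_comm (v a)]

lemma prodCongr_swap_eq_blockFlip_one :
    Equiv.prodCongr (Equiv.refl (Fin m)) (Equiv.swap (0 : Fin 2) 1) = blockFlip 1 := by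
  ext ⟨a, i⟩ <;> fin_cases i <;> simp

lemma blockFlip_single_one (a : Fin m) :
    blockFlip (Pi.single a 1) = Equiv.swap (a, 0) (a, 1) := by
  ext ⟨b, i⟩ : 1
  by_cases hb : b = a
  · subst hb; fin_cases i <;> simp
  · rw [Equiv.swap_apply_of_ne_of_ne (by simp [hb]) (by simp [hb])]
    simp [hb]

lemma sign_blockFlip (v : Fin m → Fin 2) :
    Equiv.Perm.sign (blockFlip v) = (-1) ^ (parity v : ℕ) := by
  induction v using Pi.single_induction with
  | zero => simp
  | add v w hv hw =>
    rw [blockFlip_add, map_mul, hv, hw, map_add, Fin.val_add, ← Int.units_pow_eq_pow_mod_two,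
      pow_add]
  | single a x =>
    rcases Fin.two_eq_zero_or_one x with rfl | rfl
    · simp
    · rw [blockFlip_single_one, Equiv.Perm.sign_swap (by simp), parity_single]; rfl

lemma sign_blockFlip_eq_one_iff (v : Fin m → Fin 2) :
    Equiv.Perm.sign (blockFlip v) = 1 ↔ parity v = 0 := by
  rw [sign_blockFlip]
  generalize parity v = x
  revert x; decide

lemma IsBlockFixing.eq_blockFlip {σ : Equiv.Perm (Fin m × Fin 2)} (hσ : IsBlockFixing σ) :
    σ = blockFlip fun a => (σ (a, 0)).2 := by
  have hσ' : IsBlockPreserving σ := fun a => (hσ a 0).trans (hσ a 1).symm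
  ext ⟨a, i⟩ : 1
  simpa [hσ a 0, add_comm i] using hσ'.apply_add a 0 i

lemma IsBlockPreserving.mul_blockFlip_comp {g : Equiv.Perm (Fin m × Fin 2)}
    (hg : IsBlockPreserving g) {π : Equiv.Perm (Fin m)} (hπ : ∀ a, (g (a, 0)).1 = π a)
    (v : Fin m → Fin 2) : g * blockFlip (v ∘ π) = blockFlip v * g := by
  ext ⟨a, i⟩ : 1
  have hfst : (g (a, i)).1 = π a := (hg.fst_apply _).trans (hπ a)
  simp only [Equiv.Perm.mul_apply, blockFlip_apply, Function.comp_apply, hg.apply_add]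
  rw [← Prod.mk.eta (p := g (a, i)), blockFlip_apply, hfst]

end Blocks

section BlockSubgroups

variable {m : ℕ} {G : Subgroup (Equiv.Perm (Fin m × Fin 2))}

def blockImage (G : Subgroup (Equiv.Perm (Fin m × Fin 2))) : Set (Equiv.Perm (Fin m)) :=
  {π | ∃ g ∈ G, ∀ a, (g (a, 0)).1 = π a}

def flipSubgroup (G : Subgroup (Equiv.Perm (Fin m × Fin 2))) : AddSubgroup (Fin m → Fin 2) where
  carrier := {v | blockFlip v ∈ G}
  zero_mem' := by simp [G.one_mem]
  add_mem' {v w} hv hw := by simpa [blockFlip_add] using G.mul_mem hv hw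
  neg_mem' {v} hv := by
    rwa [neg_eq_of_add_eq_zero_left (funext fun a => Fin.two_add_self (v a))]

lemma mem_flipSubgroup {v : Fin m → Fin 2} : v ∈ flipSubgroup G ↔ blockFlip v ∈ G := Iff.rfl

lemma comp_mem_flipSubgroup {g : Equiv.Perm (Fin m × Fin 2)} (hg : g ∈ G)
    (hgb : IsBlockPreserving g) {π : Equiv.Perm (Fin m)} (hπ : ∀ a, (g (a, 0)).1 = π a)
    {v : Fin m → Fin 2} (hv : v ∈ flipSubgroup G) : v ∘ π ∈ flipSubgroup G := by
  rw [mem_flipSubgroup, eq_inv_mul_of_mul_eq (hgb.mul_blockFlip_comp hπ v)]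
  exact G.mul_mem (G.inv_mem hg) (G.mul_mem hv hg)

def blockPermHom (hG : ∀ g ∈ G, IsBlockPreserving g) : G →* Equiv.Perm (Fin m) where
  toFun g :=
    { toFun a := (g.1 (a, 0)).1
      invFun a := (g.1⁻¹ (a, 0)).1
      left_inv a := by simpa using ((hG _ (G.inv_mem g.2)).fst_apply (g.1 (a, 0))).symm
      right_inv a := by simpa using ((hG _ g.2).fst_apply (g.1⁻¹ (a, 0))).symm }
  map_one' := rfl
  map_mul' g h := Equiv.ext fun a => (hG _ g.2).fst_apply (h.1 (a, 0))

lemma coe_range_blockPermHom (hG : ∀ g ∈ G, IsBlockPreserving g) :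
    ((blockPermHom hG).range : Set (Equiv.Perm (Fin m))) = blockImage G := by
  ext π
  constructor
  · rintro ⟨g, rfl⟩
    exact ⟨g.1, g.2, fun a => rfl⟩
  · rintro ⟨g, hg, hgπ⟩
    exact ⟨⟨g, hg⟩, Equiv.ext hgπ⟩

lemma mem_ker_blockPermHom_iff (hG : ∀ g ∈ G, IsBlockPreserving g) (g : G) :
    g ∈ (blockPermHom hG).ker ↔ IsBlockFixing g.1 := by
  rw [MonoidHom.mem_ker, Equiv.ext_iff]
  refine ⟨fun h a i => ?_, fun h a => h a 0⟩
  rw [(hG _ g.2).fst_apply]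
  exact h a

def kerBlockPermHomEquiv (hG : ∀ g ∈ G, IsBlockPreserving g) :
    (blockPermHom hG).ker ≃ flipSubgroup G where
  toFun g := ⟨fun a => (g.1.1 (a, 0)).2, by
    rw [mem_flipSubgroup, ← ((mem_ker_blockPermHom_iff hG g).mp g.2).eq_blockFlip]
    exact g.1.2⟩
  invFun v := ⟨⟨blockFlip v, v.2⟩, (mem_ker_blockPermHom_iff hG _).mpr fun _ _ => rfl⟩
  left_inv g :=
    Subtype.ext (Subtype.ext ((mem_ker_blockPermHom_iff hG g).mp g.2).eq_blockFlip.symm)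
  right_inv v := Subtype.ext (funext fun a => by simp)

lemma card_eq_card_range_blockPermHom_mul (hG : ∀ g ∈ G, IsBlockPreserving g) :
    Nat.card G = Nat.card (blockPermHom hG).range * Nat.card (flipSubgroup G) := by
  rw [← Nat.card_congr (kerBlockPermHomEquiv hG), ← Subgroup.index_ker, mul_comm,
    Subgroup.card_mul_index]

lemma blockImage_blockW (H : Subgroup (Equiv.Perm (Fin m))) : blockImage (blockW H) = H := by
  ext π
  constructor
  · rintro ⟨g, ⟨-, π', hπ', hgπ'⟩, hgπ⟩
    rwa [show π = π' from Equiv.ext fun a => (hgπ a).symm.trans (hgπ' a)]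
  · intro hπ
    exact ⟨Equiv.prodCongr π (Equiv.refl _), ⟨fun _ => rfl, π, hπ, fun _ => rfl⟩, fun _ => rfl⟩

lemma flipSubgroup_blockW (H : Subgroup (Equiv.Perm (Fin m))) : flipSubgroup (blockW H) = ⊤ :=
  eq_top_iff.mpr fun _ _ => ⟨fun _ => rfl, 1, H.one_mem, fun _ => rfl⟩

lemma relIndex_blockW_eq_index_flipSubgroup {H : Subgroup (Equiv.Perm (Fin m))}
    (hGW : G ≤ blockW H) (hIm : blockImage G = H) :
    G.relIndex (blockW H) = (flipSubgroup G).index := by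
  have hW := card_eq_card_range_blockPermHom_mul (G := blockW H) fun _ hg => hg.1
  have hG := card_eq_card_range_blockPermHom_mul fun _ hg => (hGW hg).1
  rw [SetLike.coe_injective ((coe_range_blockPermHom _).trans (blockImage_blockW H)),
    flipSubgroup_blockW, AddSubgroup.card_top, ← (flipSubgroup G).card_mul_index] at hW
  rw [SetLike.coe_injective ((coe_range_blockPermHom _).trans hIm)] at hG
  have hGW' := Subgroup.relIndex_mul_relIndex ⊥ G (blockW H) bot_le hGW
  rw [Subgroup.relIndex_bot_left, Subgroup.relIndex_bot_left, hG, hW, ← mul_assoc] at hGW'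
  exact Nat.eq_of_mul_eq_mul_left (Nat.mul_pos Nat.card_pos Nat.card_pos) hGW'

end BlockSubgroups

theorem stmt7_general {m : ℕ} (hm : 3 ≤ m) (H : Subgroup (Equiv.Perm (Fin m)))
    (hH : H = ⊤ ∨ H = alternatingGroup (Fin m))
    (G : Subgroup (Equiv.Perm (Fin m × Fin 2)))
    (hGW : G ≤ blockW H)
    -- the image of f on G equals H
    (hIm : {π : Equiv.Perm (Fin m) | ∃ g ∈ G, ∀ a, (g (a, 0)).1 = π a} = ↑H) :
    G.relIndex (blockW H) ∈ ({1, 2, 2 ^ (m - 1), 2 ^ m} : Set ℕ) ∧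
    (G.relIndex (blockW H) = 2 ^ (m - 1) →
      Equiv.prodCongr (Equiv.refl (Fin m)) (Equiv.swap (0 : Fin 2) 1) ∈ G) ∧
    (G.relIndex (blockW H) = 2 →
      ∀ σ : Equiv.Perm (Fin m × Fin 2), IsBlockFixing σ →
        Equiv.Perm.sign σ = 1 → σ ∈ G) := by
  have : Nonempty (Fin m) := ⟨⟨0, by omega⟩⟩
  have hA : ∀ π ∈ alternatingGroup (Fin m), ∀ v ∈ flipSubgroup G, v ∘ π ∈ flipSubgroup G := by
    intro π hπ v hv
    have hπH : π ∈ (H : Set _) := by rcases hH with rfl | rfl; exacts [Subgroup.mem_top π, hπ]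
    obtain ⟨g, hg, hgπ⟩ := hIm ▸ hπH
    exact comp_mem_flipSubgroup hg (hGW hg).1 hgπ hv
  have h4 : 4 ≤ 2 ^ (m - 1) := by
    calc 4 = 2 ^ 2 := rfl
      _ ≤ 2 ^ (m - 1) := Nat.pow_le_pow_right two_pos (by omega)
  have hlt : 2 ^ (m - 1) < 2 ^ m := Nat.pow_lt_pow_right one_lt_two (by omega)
  rw [relIndex_blockW_eq_index_flipSubgroup hGW hIm, prodCongr_swap_eq_blockFlip_one]
  rcases forall_eq_zero_or_eq_one_or_ker_parity_le hA (by simpa using hm) with hconst | hE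
  · rcases index_eq_of_forall_eq_zero_or_eq_one hconst with h | ⟨h, h1⟩ <;>
      simp only [Fintype.card_fin] at h
    · refine ⟨by simp [h], fun h' => by omega, fun h' => by omega⟩
    · exact ⟨by simp [h], fun _ => h1, fun h' => by omega⟩
  · have hdvd := index_dvd_two_of_ker_parity_le hE
    refine ⟨?_, fun h => by rw [h] at hdvd; have := Nat.le_of_dvd two_pos hdvd; omega,
      fun _ σ hσ hsign => ?_⟩
    · rcases (Nat.dvd_prime Nat.prime_two).mp hdvd with h | h <;> simp [h]
    · rw [hσ.eq_blockFlip, sign_blockFlip_eq_one_iff] at hsign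
      rw [hσ.eq_blockFlip]
      exact hE hsign

theorem stmt7 {m : ℕ} (hm : 3 ≤ m) (H : Subgroup (Equiv.Perm (Fin m)))
    (hH : H = ⊤ ∨ H = alternatingGroup (Fin m))
    (G : Subgroup (Equiv.Perm (Fin m × Fin 2)))
    (hGW : G ≤ blockW H)
    (htrans : MulAction.IsPretransitive ↥G (Fin m × Fin 2))
    -- the image of f on G equals H
    (hIm : {π : Equiv.Perm (Fin m) | ∃ g ∈ G, ∀ a, (g (a, 0)).1 = π a} = ↑H) :
    G.relIndex (blockW H) ∈ ({1, 2, 2 ^ (m - 1), 2 ^ m} : Set ℕ) ∧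
    (G.relIndex (blockW H) = 2 ^ (m - 1) →
      Equiv.prodCongr (Equiv.refl (Fin m)) (Equiv.swap (0 : Fin 2) 1) ∈ G) ∧
    (G.relIndex (blockW H) = 2 →
      ∀ σ : Equiv.Perm (Fin m × Fin 2), IsBlockFixing σ →
        Equiv.Perm.sign σ = 1 → σ ∈ G) :=
  stmt7_general hm H hH G hGW hIm
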